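/- In the canonical model of Λ, the relation w ≈_α v ∘ R_□ composite, i.e., the relation defined by membership in α_k[w] = {v : for all ψ, K_α□ψ ∈ w implies ψ ∈ v}, is an equivalence relation on maximal consistent sets, because the S5 axioms for the composite operator K_α□ are derivable in Λ. -/

import Mathlib

/-- Formulas of the language `L_KO`, with operators `□`, `[α]`, `K_α`,
`⊙[α]` (objective ought) and `⊙_S[α]` (subjective ought). -/
inductive Form (Ags : Type) : Type
  | atom : Nat → Form Ags
  | bot  : Form Ags
  | imp  : Form Ags → Form Ags → Form Ags
  | box  : Form Ags → Form Ags
  | act  : Ags → Form Ags → Form Ags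
  | know : Ags → Form Ags → Form Ags
  | obj  : Ags → Form Ags → Form Ags
  | subj : Ags → Form Ags → Form Ags

namespace Form

variable {Ags : Type}

def neg (φ : Form Ags) : Form Ags := imp φ bot
def dia (φ : Form Ags) : Form Ags := neg (box (neg φ))
def conj (φ ψ : Form Ags) : Form Ags := neg (imp φ (neg ψ))
def disj (φ ψ : Form Ags) : Form Ags := imp (neg φ) ψ
def conjl : List (Form Ags) → Form Ags
  | [] => neg bot
  | φ :: l => conj φ (conjl l)

end Form

open Form

/-- The Hilbert-style proof system `Λ`. -/
inductive Prov {Ags : Type} : Form Ags → Prop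
  | pl1 (φ ψ : Form Ags) : Prov (imp φ (imp ψ φ))
  | pl2 (φ ψ χ : Form Ags) :
      Prov (imp (imp φ (imp ψ χ)) (imp (imp φ ψ) (imp φ χ)))
  | pl3 (φ ψ : Form Ags) : Prov (imp (imp (neg φ) (neg ψ)) (imp ψ φ))
  | mp {φ ψ : Form Ags} : Prov (imp φ ψ) → Prov φ → Prov ψ
  -- S5 axioms and necessitation for □
  | boxK (φ ψ : Form Ags) : Prov (imp (box (imp φ ψ)) (imp (box φ) (box ψ)))
  | boxT (φ : Form Ags) : Prov (imp (box φ) φ)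
  | box4 (φ : Form Ags) : Prov (imp (box φ) (box (box φ)))
  | box5 (φ : Form Ags) : Prov (imp (dia φ) (box (dia φ)))
  | boxNec {φ : Form Ags} : Prov φ → Prov (box φ)
  -- S5 axioms and necessitation for [α]
  | actK (a : Ags) (φ ψ : Form Ags) :
      Prov (imp (act a (imp φ ψ)) (imp (act a φ) (act a ψ)))
  | actT (a : Ags) (φ : Form Ags) : Prov (imp (act a φ) φ)
  | act4 (a : Ags) (φ : Form Ags) : Prov (imp (act a φ) (act a (act a φ)))
  | act5 (a : Ags) (φ : Form Ags) :
      Prov (imp (neg (act a φ)) (act a (neg (act a φ))))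
  | actNec {φ : Form Ags} (a : Ags) : Prov φ → Prov (act a φ)
  -- S5 axioms and necessitation for K_α
  | knowK (a : Ags) (φ ψ : Form Ags) :
      Prov (imp (know a (imp φ ψ)) (imp (know a φ) (know a ψ)))
  | knowT (a : Ags) (φ : Form Ags) : Prov (imp (know a φ) φ)
  | know4 (a : Ags) (φ : Form Ags) : Prov (imp (know a φ) (know a (know a φ)))
  | know5 (a : Ags) (φ : Form Ags) :
      Prov (imp (neg (know a φ)) (know a (neg (know a φ))))
  | knowNec {φ : Form Ags} (a : Ags) : Prov φ → Prov (know a φ)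
  -- deontic-epistemic axioms
  | a1 (a : Ags) (φ ψ : Form Ags) :
      Prov (imp (obj a (imp φ ψ)) (imp (obj a φ) (obj a ψ)))
  | a2 (a : Ags) (φ : Form Ags) :
      Prov (imp (box φ) (conj (act a φ) (obj a φ)))
  | a3 (a : Ags) (φ : Form Ags) :
      Prov (disj (box (obj a φ)) (box (neg (obj a φ))))
  | a4 (a : Ags) (φ : Form Ags) : Prov (imp (obj a φ) (obj a (act a φ)))
  | oic (a : Ags) (φ : Form Ags) : Prov (imp (obj a φ) (dia (act a φ)))
  | ia (l : List (Ags × Form Ags)) (h : l.Pairwise fun p q => p.1 ≠ q.1) :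
      Prov (imp (conjl (l.map fun p => dia (act p.1 p.2)))
                (dia (conjl (l.map fun p => act p.1 p.2))))
  | a5 (a : Ags) (φ ψ : Form Ags) :
      Prov (imp (subj a (imp φ ψ)) (imp (subj a φ) (subj a ψ)))
  | a6 (a : Ags) (φ : Form Ags) : Prov (imp (subj a φ) (subj a (know a φ)))
  | oacAx (a : Ags) (φ : Form Ags) : Prov (imp (know a φ) (act a φ))
  | unifH (a : Ags) (φ : Form Ags) :
      Prov (imp (dia (know a φ)) (know a (dia φ)))
  | sN (a : Ags) (φ : Form Ags) : Prov (imp (know a (box φ)) (subj a φ))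
  | sOic (a : Ags) (φ : Form Ags) : Prov (imp (subj a φ) (dia (know a φ)))
  | clAx (a : Ags) (φ : Form Ags) :
      Prov (imp (subj a φ) (know a (box (subj a φ))))
  | objNec {φ : Form Ags} (a : Ags) : Prov φ → Prov (obj a φ)
  | subjNec {φ : Form Ags} (a : Ags) : Prov φ → Prov (subj a φ)

/-- `Λ`-consistency of a set of formulas. -/
def Consistent {Ags : Type} (Γ : Set (Form Ags)) : Prop :=
  ¬ ∃ l : List (Form Ags), (∀ φ ∈ l, φ ∈ Γ) ∧ Prov (imp (conjl l) bot)

/-- Maximal `Λ`-consistent set. -/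
def MCS {Ags : Type} (w : Set (Form Ags)) : Prop :=
  Consistent w ∧ ∀ φ : Form Ags, φ ∈ w ∨ neg φ ∈ w

/-- Canonical relation for `□`. -/
def RboxC {Ags : Type} (w v : Set (Form Ags)) : Prop :=
  ∀ φ : Form Ags, box φ ∈ w → φ ∈ v

/-- Canonical relation for `[α]`. -/
def RactC {Ags : Type} (a : Ags) (w v : Set (Form Ags)) : Prop :=
  ∀ φ : Form Ags, act a φ ∈ w → φ ∈ v

/-- Canonical relation for `K_α`. -/
def RknowC {Ags : Type} (a : Ags) (w v : Set (Form Ags)) : Prop :=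
  ∀ φ : Form Ags, know a φ ∈ w → φ ∈ v

/-- `Σ_α^w = {[α]φ : ⊙[α]φ ∈ w}`. -/
def SigmaSet {Ags : Type} (a : Ags) (w : Set (Form Ags)) : Set (Form Ags) :=
  {ψ | ∃ φ, ψ = act a φ ∧ obj a φ ∈ w}

/-- `Γ_α^w = {K_αφ : ⊙_S[α]φ ∈ w}`. -/
def GammaSet {Ags : Type} (a : Ags) (w : Set (Form Ags)) : Set (Form Ags) :=
  {ψ | ∃ φ, ψ = know a φ ∧ subj a φ ∈ w}

/-- `v ∈ α_k[w]`: the canonical relation of the composite operator `K_α□`. -/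
def alphak {Ags : Type} (a : Ags) (w v : Set (Form Ags)) : Prop :=
  ∀ φ : Form Ags, know a (box φ) ∈ w → φ ∈ v

/-!
`K_α□` inherits T from `K_α` and `□`. For 5, the point is that `K_α□φ` is `□`-rigid:
`◇K_α□φ → K_α◇□φ → K_α□φ` by uniformity of historical possibility and S5 for `□`, so
`¬K_α□φ → □¬K_α□φ`; feeding this into 5 for `K_α` gives `¬K_α□φ → K_α□¬K_α□φ`.
For any monotone operator T and 5 yield B and then 4, and the canonical relation of an
operator satisfying T, 4 and 5 is an equivalence relation on maximal consistent sets.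
-/

namespace Prov

variable {Ags : Type}

theorem imp_of_prov {φ ψ : Form Ags} (h : Prov ψ) : Prov (imp φ ψ) := mp (pl1 _ _) h

theorem mpd {φ ψ χ : Form Ags} (h₁ : Prov (imp φ (imp ψ χ))) (h₂ : Prov (imp φ ψ)) :
    Prov (imp φ χ) :=
  mp (mp (pl2 _ _ _) h₁) h₂

theorem imp_self (φ : Form Ags) : Prov (imp φ φ) := mpd (pl1 φ (imp φ φ)) (pl1 φ φ)

theorem imp_trans {φ ψ χ : Form Ags} (h₁ : Prov (imp φ ψ)) (h₂ : Prov (imp ψ χ)) :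
    Prov (imp φ χ) :=
  mpd (imp_of_prov h₂) h₁

theorem imp_swap {φ ψ χ : Form Ags} (h : Prov (imp φ (imp ψ χ))) : Prov (imp ψ (imp φ χ)) :=
  imp_trans (pl1 ψ φ) (mp (pl2 _ _ _) h)

theorem imp_imp_of_imp {ψ χ : Form Ags} (φ : Form Ags) (h : Prov (imp ψ χ)) :
    Prov (imp (imp φ ψ) (imp φ χ)) :=
  mp (pl2 _ _ _) (imp_of_prov h)

theorem not_not_intro (φ : Form Ags) : Prov (imp φ (neg (neg φ))) := imp_swap (imp_self (neg φ))

theorem not_not_elim (φ : Form Ags) : Prov (imp (neg (neg φ)) φ) :=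
  mp (pl3 φ (neg (neg φ))) (not_not_intro (neg φ))

theorem contrapose {φ ψ : Form Ags} (h : Prov (imp φ ψ)) : Prov (imp (neg ψ) (neg φ)) :=
  imp_swap (imp_trans h (not_not_intro ψ))

theorem bot_imp (φ : Form Ags) : Prov (imp bot φ) := mp (pl3 φ bot) (imp_of_prov (imp_self bot))

theorem conj_imp_left (φ ψ : Form Ags) : Prov (imp (conj φ ψ) φ) :=
  mp (pl3 φ (conj φ ψ))
    (imp_trans (imp_imp_of_imp φ (bot_imp (neg ψ))) (not_not_intro (imp φ (neg ψ))))

theorem conj_imp_right (φ ψ : Form Ags) : Prov (imp (conj φ ψ) ψ) :=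
  mp (pl3 ψ (conj φ ψ)) (imp_trans (pl1 (neg ψ) φ) (not_not_intro (imp φ (neg ψ))))

theorem box_mono {φ ψ : Form Ags} (h : Prov (imp φ ψ)) : Prov (imp (box φ) (box ψ)) :=
  mp (boxK _ _) (boxNec h)

theorem know_mono {φ ψ : Form Ags} (a : Ags) (h : Prov (imp φ ψ)) :
    Prov (imp (know a φ) (know a ψ)) :=
  mp (knowK a _ _) (knowNec a h)

theorem dia_box_imp_box (φ : Form Ags) : Prov (imp (dia (box φ)) (box φ)) := by
  have dia_box_imp_not_box_dia : Prov (imp (dia (box φ)) (neg (box (dia (neg φ))))) :=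
    contrapose (box_mono (contrapose (box_mono (not_not_intro φ))))
  have not_dia_neg_imp_box : Prov (imp (neg (dia (neg φ))) (box φ)) :=
    imp_trans (not_not_elim _) (box_mono (not_not_elim φ))
  exact imp_trans (imp_trans dia_box_imp_not_box_dia (contrapose (box5 (neg φ))))
    not_dia_neg_imp_box

theorem not_knowBox_imp_box_not_knowBox (a : Ags) (φ : Form Ags) :
    Prov (imp (neg (know a (box φ))) (box (neg (know a (box φ))))) := by
  have dia_knowBox_imp_knowBox : Prov (imp (dia (know a (box φ))) (know a (box φ))) :=
    imp_trans (unifH a (box φ)) (know_mono a (dia_box_imp_box φ))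
  exact imp_trans (contrapose dia_knowBox_imp_knowBox) (not_not_elim _)

theorem knowBox_T (a : Ags) (φ : Form Ags) : Prov (imp (know a (box φ)) φ) :=
  imp_trans (knowT a (box φ)) (boxT φ)

theorem knowBox_five (a : Ags) (φ : Form Ags) :
    Prov (imp (neg (know a (box φ))) (know a (box (neg (know a (box φ)))))) :=
  imp_trans (know5 a (box φ)) (know_mono a (not_knowBox_imp_box_not_knowBox a φ))

section Modality

variable {M : Form Ags → Form Ags}

theorem brouwer_of_T_five (hT : ∀ φ, Prov (imp (M φ) φ))
    (h5 : ∀ φ, Prov (imp (neg (M φ)) (M (neg (M φ))))) (ψ : Form Ags) :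
    Prov (imp ψ (M (neg (M (neg ψ))))) :=
  imp_trans (imp_trans (not_not_intro ψ) (contrapose (hT (neg ψ)))) (h5 (neg ψ))

theorem four_of_T_five (mono : ∀ {φ ψ}, Prov (imp φ ψ) → Prov (imp (M φ) (M ψ)))
    (hT : ∀ φ, Prov (imp (M φ) φ)) (h5 : ∀ φ, Prov (imp (neg (M φ)) (M (neg (M φ)))))
    (φ : Form Ags) : Prov (imp (M φ) (M (M φ))) :=
  imp_trans (brouwer_of_T_five hT h5 (M φ))
    (mono (imp_trans (contrapose (h5 φ)) (not_not_elim (M φ))))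

end Modality

theorem knowBox_four (a : Ags) (φ : Form Ags) :
    Prov (imp (know a (box φ)) (know a (box (know a (box φ))))) :=
  four_of_T_five (fun h => know_mono a (box_mono h)) (knowBox_T a) (knowBox_five a) φ

end Prov

namespace MCS

variable {Ags : Type} {w : Set (Form Ags)}

theorem false_of_mem_of_mem (hw : MCS w) {φ ψ : Form Ags} (hφ : φ ∈ w) (hψ : ψ ∈ w)
    (h : Prov (imp φ (neg ψ))) : False := by
  refine hw.1 ⟨[φ, ψ], ?_, ?_⟩
  · simp only [List.mem_cons, List.not_mem_nil, or_false]
    rintro χ (rfl | rfl) <;> assumption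
  · exact Prov.mpd (Prov.imp_trans (Prov.conj_imp_left _ _) h)
      (Prov.imp_trans (Prov.conj_imp_right φ _) (Prov.conj_imp_left _ _))

theorem notMem_of_neg_mem (hw : MCS w) {φ : Form Ags} (h : neg φ ∈ w) : φ ∉ w :=
  fun hφ => hw.false_of_mem_of_mem hφ h (Prov.not_not_intro φ)

theorem mem_of_prov_imp (hw : MCS w) {φ ψ : Form Ags} (hφ : φ ∈ w) (h : Prov (imp φ ψ)) :
    ψ ∈ w :=
  (hw.2 ψ).resolve_right fun hψ =>
    hw.false_of_mem_of_mem hφ hψ (Prov.imp_trans h (Prov.not_not_intro ψ))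

end MCS

def canonicalRel {Ags : Type} (M : Form Ags → Form Ags) (w v : Set (Form Ags)) : Prop :=
  ∀ φ : Form Ags, M φ ∈ w → φ ∈ v

section CanonicalRel

variable {Ags : Type} {M : Form Ags → Form Ags} {w v u : Set (Form Ags)}

theorem canonicalRel_refl (hT : ∀ φ, Prov (imp (M φ) φ)) (hw : MCS w) : canonicalRel M w w :=
  fun φ hφ => hw.mem_of_prov_imp hφ (hT φ)

theorem canonicalRel_symm (hT : ∀ φ, Prov (imp (M φ) φ))
    (h5 : ∀ φ, Prov (imp (neg (M φ)) (M (neg (M φ))))) (hw : MCS w) (hv : MCS v)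
    (hwv : canonicalRel M w v) : canonicalRel M v w := by
  intro φ hφv
  refine (hw.2 φ).resolve_right fun hnφ => ?_
  have hnMφ : neg (M φ) ∈ w := hw.mem_of_prov_imp hnφ (Prov.contrapose (hT φ))
  exact hv.notMem_of_neg_mem (hwv _ (hw.mem_of_prov_imp hnMφ (h5 φ))) hφv

theorem canonicalRel_trans (h4 : ∀ φ, Prov (imp (M φ) (M (M φ)))) (hw : MCS w)
    (hwv : canonicalRel M w v) (hvu : canonicalRel M v u) : canonicalRel M w u :=
  fun φ hφ => hvu φ (hwv _ (hw.mem_of_prov_imp hφ (h4 φ)))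

end CanonicalRel

/-- The S5 laws of the composite operator `K_α□` are derivable in `Λ`, and
consequently the canonical relation `α_k` is an equivalence relation on the
maximal consistent sets. -/
theorem statement15 {Ags : Type} (a : Ags) :
    (∀ φ : Form Ags, Prov (Form.imp (Form.know a (Form.box φ)) φ)) ∧
    (∀ φ : Form Ags,
      Prov (Form.imp (Form.know a (Form.box φ))
        (Form.know a (Form.box (Form.know a (Form.box φ)))))) ∧
    (∀ φ : Form Ags,
      Prov (Form.imp (Form.neg (Form.know a (Form.box φ)))
        (Form.know a (Form.box (Form.neg (Form.know a (Form.box φ))))))) ∧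
    (∀ w : Set (Form Ags), MCS w → alphak a w w) ∧
    (∀ w v : Set (Form Ags), MCS w → MCS v → alphak a w v → alphak a v w) ∧
    (∀ w v u : Set (Form Ags), MCS w → MCS v → MCS u →
      alphak a w v → alphak a v u → alphak a w u) :=
  ⟨Prov.knowBox_T a, Prov.knowBox_four a, Prov.knowBox_five a,
    fun _ hw => canonicalRel_refl (Prov.knowBox_T a) hw,
    fun _ _ hw hv => canonicalRel_symm (Prov.knowBox_T a) (Prov.knowBox_five a) hw hv,
    fun _ _ _ hw _ _ => canonicalRel_trans (Prov.knowBox_four a) hw⟩
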